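/- If ρ is a stochastically stationary random state for a random Kraus ensemble over an ergodic invertible system, then the annealed quantum probability measure ℚ̄_ρ on Ω × 𝒜^ℕ is invariant under the skew shift τ(ω, ā) = (θ(ω), σ(ā)). -/

import Mathlib

open MeasureTheory Matrix Filter
open scoped ComplexOrder ENNReal

/-- Cylinder set of sequences whose first n coordinates equal a given word. -/
def cyl {𝒜 : Type*} (n : ℕ) (w : Fin n → 𝒜) : Set (ℕ → 𝒜) :=
  {x | ∀ i : Fin n, x i = w i}

/-- V_{n;ω}(a_1,…,a_n) = v_{a_n; θⁿ(ω)} ⋯ v_{a_1; θ(ω)}. -/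
noncomputable def Vq {Ω 𝒜 : Type*} {d : ℕ} (v : Ω → 𝒜 → Matrix (Fin d) (Fin d) ℂ)
    (θ : Ω → Ω) (ω : Ω) : (n : ℕ) → (Fin n → 𝒜) → Matrix (Fin d) (Fin d) ℂ
  | 0, _ => 1
  | n + 1, w => v (θ^[n + 1] ω) (w (Fin.last n)) * Vq v θ ω n (fun i => w i.castSucc)

/-- The left shift σ on 𝒜^ℕ. -/
def shiftSeq {𝒜 : Type*} (x : ℕ → 𝒜) : ℕ → 𝒜 := fun k => x (k + 1)

/-- The skew shift τ(ω, ā) = (θ(ω), σ(ā)). -/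
def tau {Ω 𝒜 : Type*} (θ : Ω → Ω) : Ω × (ℕ → 𝒜) → Ω × (ℕ → 𝒜) :=
  fun p => (θ p.1, shiftSeq p.2)

/-- The annealed quantum measure ℚ̄(Γ) = ∫_Ω ℚ_ω(Γ^ω) dℙ(ω). -/
noncomputable def annealed {Ω 𝒜 : Type*} [MeasurableSpace Ω] [MeasurableSpace 𝒜] (μ : Measure Ω)
    (Q : Ω → Measure (ℕ → 𝒜)) (Γ : Set (Ω × (ℕ → 𝒜))) : ℝ≥0∞ :=
  ∫⁻ ω, Q ω {x | (ω, x) ∈ Γ} ∂μ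

/-!
Stationarity makes the quenched measures a cocycle for the skew shift: for almost every `ω`,
pushing `ℚ_ω` forward by the left shift gives `ℚ_{θ ω}`. On a cylinder `[w]` the preimage under the
shift is the disjoint union of the cylinders `[a w]`, and since `V_{n+1;ω}(a w) = V_{n;θω}(w) v_{a;θω}`
the sum over `a` of their probabilities is `Tr(V_{n;θω}(w) φ_{θω}(ρ_ω) V_{n;θω}(w)†)`, which is
`ℚ_{θω}[w]` because `φ_{θω}(ρ_ω) = ρ_{θω}`. Cylinders form a π-system generating the product
σ-algebra, so the measures agree. It remains to integrate the sections of `Γ` and use that `θ`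
preserves `ℙ`.
-/

section Cylinders

variable {𝒜 : Type*}

@[simp]
lemma cyl_zero (w : Fin 0 → 𝒜) : cyl 0 w = Set.univ := by
  simp [cyl]

lemma cyl_inter_cyl_of_le {n m : ℕ} (h : n ≤ m) (w : Fin n → 𝒜) (u : Fin m → 𝒜)
    (hne : (cyl n w ∩ cyl m u).Nonempty) : cyl n w ∩ cyl m u = cyl m u := by
  obtain ⟨x, hxw, hxu⟩ := hne
  refine Set.inter_eq_self_of_subset_right fun y hy i => ?_
  let j : Fin m := ⟨i, i.2.trans_le h⟩
  rw [← hxw i]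
  exact (hy j).trans (hxu j).symm

lemma isPiSystem_cyl : IsPiSystem {S : Set (ℕ → 𝒜) | ∃ n w, S = cyl n w} := by
  rintro s ⟨n, w, rfl⟩ t ⟨m, u, rfl⟩ hne
  rcases le_total n m with h | h
  · exact ⟨m, u, cyl_inter_cyl_of_le h w u hne⟩
  · rw [Set.inter_comm] at hne ⊢
    exact ⟨n, w, cyl_inter_cyl_of_le h u w hne⟩

lemma preimage_shiftSeq_cyl (n : ℕ) (w : Fin n → 𝒜) :
    shiftSeq ⁻¹' cyl n w = ⋃ a : 𝒜, cyl (n + 1) (Fin.cons a w) := by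
  ext x
  simp only [Set.mem_preimage, Set.mem_iUnion, cyl, Set.mem_ofPred_eq, shiftSeq]
  constructor
  · intro h
    refine ⟨x 0, Fin.cases (by simp) fun j => ?_⟩
    simpa using h j
  · rintro ⟨a, h⟩ i
    simpa using h i.succ

lemma pairwise_disjoint_cyl_cons (n : ℕ) (w : Fin n → 𝒜) :
    Pairwise (Function.onFun Disjoint fun a : 𝒜 => cyl (n + 1) (Fin.cons a w)) := by
  intro a b hab
  refine Set.disjoint_left.mpr fun x hxa hxb => hab ?_
  simpa using (hxa 0).symm.trans (hxb 0)

variable [MeasurableSpace 𝒜]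

lemma measurable_shiftSeq : Measurable (shiftSeq (𝒜 := 𝒜)) :=
  measurable_pi_lambda _ fun k => measurable_pi_apply (k + 1)

variable [MeasurableSingletonClass 𝒜]

lemma measurableSet_cyl (n : ℕ) (w : Fin n → 𝒜) : MeasurableSet (cyl n w) := by
  have h : cyl n w = ⋂ i : Fin n, (fun x : ℕ → 𝒜 => x i) ⁻¹' {w i} := by
    ext x; simp [cyl]
  rw [h]
  exact .iInter fun i => measurable_pi_apply _ (measurableSet_singleton _)

lemma measurableSpace_pi_eq_generateFrom_cyl [Countable 𝒜] :
    (inferInstance : MeasurableSpace (ℕ → 𝒜)) =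
      MeasurableSpace.generateFrom {S : Set (ℕ → 𝒜) | ∃ n w, S = cyl n w} := by
  refine le_antisymm (iSup_le fun i => ?_) (MeasurableSpace.generateFrom_le ?_)
  · rw [MeasurableSpace.comap_le_iff_le_map]
    intro s _
    have hset : (fun x : ℕ → 𝒜 => x i) ⁻¹' s
        = ⋃ (w : Fin (i + 1) → 𝒜) (_ : w (Fin.last i) ∈ s), cyl (i + 1) w := by
      ext x
      simp only [Set.mem_preimage, Set.mem_iUnion, cyl, Set.mem_ofPred_eq]
      constructor
      · intro hx
        exact ⟨fun j => x j, by simpa using hx, fun j => rfl⟩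
      · rintro ⟨w, hw, hxw⟩
        have hx := hxw (Fin.last i)
        rw [Fin.val_last] at hx
        rwa [hx]
    rw [MeasurableSpace.map_def, hset]
    exact .iUnion fun w => .iUnion fun _ =>
      MeasurableSpace.measurableSet_generateFrom ⟨i + 1, w, rfl⟩
  · rintro s ⟨n, w, rfl⟩
    exact measurableSet_cyl n w

lemma Measure.ext_of_cyl [Countable 𝒜] {μ ν : Measure (ℕ → 𝒜)} [IsFiniteMeasure μ]
    (h : ∀ n w, μ (cyl n w) = ν (cyl n w)) : μ = ν := by
  refine ext_of_generate_finite _ measurableSpace_pi_eq_generateFrom_cyl isPiSystem_cyl ?_ ?_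
  · rintro s ⟨n, w, rfl⟩
    exact h n w
  · simpa using h 0 Fin.elim0

lemma measure_preimage_shiftSeq_cyl [Fintype 𝒜] (μ : Measure (ℕ → 𝒜)) (n : ℕ)
    (w : Fin n → 𝒜) :
    μ (shiftSeq ⁻¹' cyl n w) = ∑ a, μ (cyl (n + 1) (Fin.cons a w)) := by
  rw [preimage_shiftSeq_cyl, measure_iUnion (pairwise_disjoint_cyl_cons n w)
    fun a => measurableSet_cyl _ _, tsum_fintype]

end Cylinders

section Kraus

variable {Ω 𝒜 : Type*} {d : ℕ}

lemma Vq_succ_cons (v : Ω → 𝒜 → Matrix (Fin d) (Fin d) ℂ) (θ : Ω → Ω) (ω : Ω) (a : 𝒜) :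
    ∀ (n : ℕ) (w : Fin n → 𝒜),
      Vq v θ ω (n + 1) (Fin.cons a w) = Vq v θ (θ ω) n w * v (θ ω) a
  | 0, w => by simp [Vq]
  | n + 1, w => by
    have hinit : (fun i : Fin (n + 1) => (Fin.cons a w : Fin (n + 2) → 𝒜) i.castSucc)
        = Fin.cons a (fun i : Fin n => w i.castSucc) := by
      funext i
      refine Fin.cases (by simp) (fun j => ?_) i
      rw [← Fin.succ_castSucc]
      simp
    have hlast : (Fin.cons a w : Fin (n + 2) → 𝒜) (Fin.last (n + 1)) = w (Fin.last n) := by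
      rw [← Fin.succ_last, Fin.cons_succ]
    rw [Vq, hinit, hlast, Vq_succ_cons v θ ω a n, Function.iterate_succ_apply, Vq, mul_assoc]

lemma sum_mul_mul_conjTranspose_mul {ι : Type*} [Fintype ι] (B ρ : Matrix (Fin d) (Fin d) ℂ)
    (K : ι → Matrix (Fin d) (Fin d) ℂ) :
    ∑ a, (B * K a) * ρ * (B * K a)ᴴ = B * (∑ a, K a * ρ * (K a)ᴴ) * Bᴴ := by
  simp only [Finset.mul_sum, Finset.sum_mul, conjTranspose_mul, mul_assoc]

lemma sum_ofReal_re_trace_of_posSemidef {ι : Type*} [Fintype ι]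
    {M : ι → Matrix (Fin d) (Fin d) ℂ} (hM : ∀ a, (M a).PosSemidef) :
    ∑ a, ENNReal.ofReal (M a).trace.re = ENNReal.ofReal (∑ a, M a).trace.re := by
  rw [trace_sum, Complex.re_sum, ENNReal.ofReal_sum_of_nonneg fun a _ =>
    (Complex.nonneg_iff.mp (hM a).trace_nonneg).1]

lemma map_shiftSeq_eq_of_cyl [Fintype 𝒜] [MeasurableSpace 𝒜] [MeasurableSingletonClass 𝒜]
    {v : Ω → 𝒜 → Matrix (Fin d) (Fin d) ℂ} {θ : Ω → Ω} {ω : Ω}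
    {ρ₀ ρ₁ : Matrix (Fin d) (Fin d) ℂ} (hρ₀ : ρ₀.PosSemidef)
    (hstep : ∑ a, v (θ ω) a * ρ₀ * (v (θ ω) a)ᴴ = ρ₁)
    {P P' : Measure (ℕ → 𝒜)} [IsFiniteMeasure P]
    (hP : ∀ n w, P (cyl n w) = ENNReal.ofReal (Vq v θ ω n w * ρ₀ * (Vq v θ ω n w)ᴴ).trace.re)
    (hP' : ∀ n w, P' (cyl n w) =
      ENNReal.ofReal (Vq v θ (θ ω) n w * ρ₁ * (Vq v θ (θ ω) n w)ᴴ).trace.re) :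
    P.map shiftSeq = P' := by
  refine Measure.ext_of_cyl fun n w => ?_
  rw [Measure.map_apply measurable_shiftSeq (measurableSet_cyl n w),
    measure_preimage_shiftSeq_cyl]
  simp only [hP, hP', Vq_succ_cons]
  rw [sum_ofReal_re_trace_of_posSemidef fun a => hρ₀.mul_mul_conjTranspose_same _,
    sum_mul_mul_conjTranspose_mul, hstep]

end Kraus

lemma annealed_preimage_tau {Ω 𝒜 : Type*} [MeasurableSpace Ω] [MeasurableSpace 𝒜]
    {μ : Measure Ω} {θ : Ω → Ω} (hθ : MeasurePreserving θ μ μ)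
    {κ : ProbabilityTheory.Kernel Ω (ℕ → 𝒜)} [ProbabilityTheory.IsSFiniteKernel κ]
    (hκ : ∀ᵐ ω ∂μ, (κ ω).map shiftSeq = κ (θ ω)) {Γ : Set (Ω × (ℕ → 𝒜))}
    (hΓ : MeasurableSet Γ) :
    annealed μ κ (tau θ ⁻¹' Γ) = annealed μ κ Γ := by
  have hsection : ∀ ω, {x | (ω, x) ∈ tau θ ⁻¹' Γ} = shiftSeq ⁻¹' {x | (θ ω, x) ∈ Γ} :=
    fun ω => rfl
  calc annealed μ κ (tau θ ⁻¹' Γ)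
      = ∫⁻ ω, κ (θ ω) {x | (θ ω, x) ∈ Γ} ∂μ := by
        refine lintegral_congr_ae ?_
        filter_upwards [hκ] with ω hω
        rw [hsection, ← hω]
        exact (Measure.map_apply measurable_shiftSeq (measurable_prodMk_left hΓ)).symm
    _ = annealed μ κ Γ :=
        hθ.lintegral_comp (ProbabilityTheory.Kernel.measurable_kernel_prodMk_left hΓ)

theorem stmt9_general {Ω 𝒜 : Type*} {d : ℕ} [Fintype 𝒜] [MeasurableSpace 𝒜]
    [MeasurableSingletonClass 𝒜]
    [MeasurableSpace Ω] (μ : Measure Ω)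
    (θ : Ω → Ω) (hθ : Ergodic θ μ)
    (v : Ω → 𝒜 → Matrix (Fin d) (Fin d) ℂ)
    (ρ : Ω → Matrix (Fin d) (Fin d) ℂ)
    (hρ : ∀ᵐ ω ∂μ, (ρ ω).PosSemidef ∧ (ρ ω).trace = 1)
    (hstat : ∀ᵐ ω ∂μ, ∑ a, v (θ ω) a * ρ ω * (v (θ ω) a)ᴴ = ρ (θ ω))
    (Q : Ω → Measure (ℕ → 𝒜)) (hQp : ∀ ω, IsProbabilityMeasure (Q ω))
    (hQmeas : ∀ E : Set (ℕ → 𝒜), MeasurableSet E → Measurable fun ω => Q ω E)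
    (hQcyl : ∀ n (w : Fin n → 𝒜), ∀ᵐ ω ∂μ,
      Q ω (cyl n w) = ENNReal.ofReal
        (Matrix.trace (Vq v θ ω n w * ρ ω * (Vq v θ ω n w)ᴴ)).re) :
    ∀ Γ : Set (Ω × (ℕ → 𝒜)), MeasurableSet Γ →
      annealed μ Q (tau θ ⁻¹' Γ) = annealed μ Q Γ := by
  intro Γ hΓ
  let κ : ProbabilityTheory.Kernel Ω (ℕ → 𝒜) := ⟨Q, Measure.measurable_of_measurable_coe _ hQmeas⟩
  have : ProbabilityTheory.IsMarkovKernel κ := ⟨hQp⟩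
  have hθμ := hθ.toMeasurePreserving
  have hQcyl_all : ∀ᵐ ω ∂μ, ∀ n (w : Fin n → 𝒜), Q ω (cyl n w) =
      ENNReal.ofReal (Vq v θ ω n w * ρ ω * (Vq v θ ω n w)ᴴ).trace.re := by
    simpa only [ae_all_iff] using hQcyl
  have hshift : ∀ᵐ ω ∂μ, (κ ω).map shiftSeq = κ (θ ω) := by
    filter_upwards [hρ, hstat, hQcyl_all, hθμ.quasiMeasurePreserving.ae hQcyl_all]
      with ω hρω hstatω hQω hQθω
    exact map_shiftSeq_eq_of_cyl hρω.1 hstatω hQω hQθω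
  exact annealed_preimage_tau hθμ hshift hΓ

/-- If ρ is a stochastically stationary random state for a random Kraus ensemble over an
ergodic invertible system, then the annealed quantum measure ℚ̄_ρ is invariant under the
skew shift τ(ω, ā) = (θ(ω), σ(ā)). -/
theorem stmt9 {Ω 𝒜 : Type*} {d : ℕ} [Fintype 𝒜] [MeasurableSpace 𝒜]
    [MeasurableSingletonClass 𝒜]
    [MeasurableSpace Ω] (μ : Measure Ω) [IsProbabilityMeasure μ]
    (θ θinv : Ω → Ω) (hθ : Ergodic θ μ)
    (hinvm : Measurable θinv) (hli : Function.LeftInverse θinv θ)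
    (hri : Function.RightInverse θinv θ)
    (v : Ω → 𝒜 → Matrix (Fin d) (Fin d) ℂ)
    (hvmeas : ∀ a i j, Measurable fun ω => v ω a i j)
    (hv : ∀ᵐ ω ∂μ, ∑ a, (v ω a)ᴴ * v ω a = 1)
    (ρ : Ω → Matrix (Fin d) (Fin d) ℂ)
    (hρmeas : ∀ i j, Measurable fun ω => ρ ω i j)
    (hρ : ∀ᵐ ω ∂μ, (ρ ω).PosSemidef ∧ (ρ ω).trace = 1)
    (hstat : ∀ᵐ ω ∂μ, ∑ a, v (θ ω) a * ρ ω * (v (θ ω) a)ᴴ = ρ (θ ω))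
    (Q : Ω → Measure (ℕ → 𝒜)) (hQp : ∀ ω, IsProbabilityMeasure (Q ω))
    (hQmeas : ∀ E : Set (ℕ → 𝒜), MeasurableSet E → Measurable fun ω => Q ω E)
    (hQcyl : ∀ n (w : Fin n → 𝒜), ∀ᵐ ω ∂μ,
      Q ω (cyl n w) = ENNReal.ofReal
        (Matrix.trace (Vq v θ ω n w * ρ ω * (Vq v θ ω n w)ᴴ)).re) :
    ∀ Γ : Set (Ω × (ℕ → 𝒜)), MeasurableSet Γ →
      annealed μ Q (tau θ ⁻¹' Γ) = annealed μ Q Γ :=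
  stmt9_general μ θ hθ v ρ hρ hstat Q hQp hQmeas hQcyl
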